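/- Fix n, r ∈ ℕ with r ≥ 1 and let g_{k,r}^{KPM} = [(r−k+2) cos(πk/(r+2)) + sin(πk/(r+2)) cot(π/(r+2))]/(r+2) be the univariate minimum-resolution coefficients. The product kernel K(x,y) = ∏_{i=1}^n (1 + 2 Σ_{k=1}^r g_{k,r}^{KPM} T_k(x_i) T_k(y_i)) on [−1,1]^n × [−1,1]^n is a polynomial kernel of degree nr that is nonnegative on [−1,1]^n × [−1,1]^n, satisfies ∫_{[−1,1]^n} K(x,y) dμ(y) = 1 for all x, and has squared resolution ∫∫ ‖x−y‖² K(x,y) dμ(x) dμ(y) = n(1 − g_{1,r}^{KPM}) = n(1 − cos(π/(r+2))). -/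

import Mathlib

open MeasureTheory Real Finset

noncomputable section

/-- The Chebyshev (arcsine) measure on ℝ, supported on [-1,1]. -/
def chebMeasure1 : Measure ℝ :=
  (volume.restrict (Set.Icc (-1 : ℝ) 1)).withDensity
    (fun x => ENNReal.ofReal ((π * Real.sqrt (1 - x ^ 2))⁻¹))

/-- The product Chebyshev measure on [-1,1]^n. -/
def chebMeasure (n : ℕ) : Measure (Fin n → ℝ) := Measure.pi fun _ => chebMeasure1

/-- The hypercube [-1,1]^n. -/
def box (n : ℕ) : Set (Fin n → ℝ) := Set.univ.pi fun _ => Set.Icc (-1 : ℝ) 1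

/-- Euclidean norm on ℝ^n. -/
def eNorm {n : ℕ} (x : Fin n → ℝ) : ℝ := Real.sqrt (∑ i, x i ^ 2)

/-- Chebyshev polynomial of the first kind, evaluated. -/
def T1 (k : ℕ) (x : ℝ) : ℝ := (Polynomial.Chebyshev.T ℝ (k : ℤ)).eval x

/-- Multivariate Chebyshev polynomial. -/
def Tm {n : ℕ} (α : Fin n → ℕ) (x : Fin n → ℝ) : ℝ := ∏ i, T1 (α i) (x i)

/-- The set ℕ^n_r of multi-indices of total degree at most r, as a finset. -/
def Nnr (n r : ℕ) : Finset (Fin n → ℕ) :=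
  (Fintype.piFinset fun _ => Finset.range (r + 1)).filter fun α => ∑ i, α i ≤ r

/-- Hamming weight: number of nonzero entries. -/
def ham {n : ℕ} (α : Fin n → ℕ) : ℕ := (Finset.univ.filter fun i => α i ≠ 0).card

/-- Modulus of continuity of `f` on the set `S`, w.r.t. the Euclidean norm. -/
def modCont {n : ℕ} (f : (Fin n → ℝ) → ℝ) (S : Set (Fin n → ℝ)) (δ : ℝ) : ℝ :=
  sSup {t : ℝ | ∃ x ∈ S, ∃ y ∈ S, eNorm (x - y) ≤ δ ∧ t = |f x - f y|}

/-!
Put `s = cos θ`, `t = cos φ`. The univariate factor is then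
`1 + 2 ∑ g_k cos kθ cos kφ = (p (θ + φ) + p (θ - φ)) / 2` with `p ψ = 1 + 2 ∑ g_k cos kψ`, and the
KPM coefficients are normalized autocorrelations, `g_k = 2/(r+2) ∑_j b_j b_{j+k}` of the sine window
`b_j = sin ((j+1) π/(r+2))`, so `p ψ = 2/(r+2) |∑_j b_j e^{ijψ}|² ≥ 0`.

The integrals follow from the orthogonality of the `T_k` for the Chebyshev probability measure:
every factor integrates to `1` in either variable, and since `(s - t)²` only involves
`T_0, T_1, T_2` in `t`, each coordinate contributes `1 - g_1` to the squared resolution; finally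
`g_1 = cos (π/(r+2))`.
-/

theorem T1_cos (k : ℕ) (θ : ℝ) : T1 k (cos θ) = cos (k * θ) := by
  simp [T1, Polynomial.Chebyshev.T_real_cos]

@[fun_prop]
theorem continuous_T1 (k : ℕ) : Continuous (T1 k) :=
  Polynomial.continuous _

@[simp]
theorem T1_zero (x : ℝ) : T1 0 x = 1 := by simp [T1]

@[simp]
theorem T1_one (x : ℝ) : T1 1 x = x := by simp [T1]

theorem T1_two (x : ℝ) : T1 2 x = 2 * x ^ 2 - 1 := by simp [T1, Polynomial.Chebyshev.T_two]

section ChebyshevMeasure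

open Polynomial.Chebyshev

theorem chebMeasure1_eq_smul_measureT : chebMeasure1 = ENNReal.ofReal π⁻¹ • measureT := by
  rw [chebMeasure1, measureT, restrict_withDensity measurableSet_Ioc,
    Measure.restrict_congr_set Ioc_ae_eq_Icc.symm, ← withDensity_smul' _ _ ENNReal.ofReal_ne_top]
  congr 1
  ext x
  rw [Pi.smul_apply, smul_eq_mul, ← ENNReal.ofReal_coe_nnreal,
    ← ENNReal.ofReal_mul (inv_nonneg.2 pi_pos.le), NNReal.coe_mk, mul_inv, Real.sqrt_inv]

theorem integral_chebMeasure1 (f : ℝ → ℝ) :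
    ∫ x, f x ∂chebMeasure1 = π⁻¹ * ∫ x, f x ∂measureT := by
  rw [chebMeasure1_eq_smul_measureT, integral_smul_measure,
    ENNReal.toReal_ofReal (inv_nonneg.2 pi_pos.le), smul_eq_mul]

theorem integrable_chebMeasure1 {f : ℝ → ℝ} (hf : ContinuousOn f (Set.Icc (-1) 1)) :
    Integrable f chebMeasure1 := by
  rw [chebMeasure1_eq_smul_measureT]
  exact (integrable_measureT hf).smul_measure ENNReal.ofReal_ne_top

theorem integral_T1 (k : ℕ) : ∫ t, T1 k t ∂chebMeasure1 = if k = 0 then 1 else 0 := by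
  rw [integral_chebMeasure1]
  split_ifs with hk
  · simp only [hk, T1, Nat.cast_zero]
    rw [integral_eval_T_real_measureT_zero, inv_mul_cancel₀ pi_ne_zero]
  · simp only [T1]
    rw [integral_eval_T_real_measureT_of_ne_zero (Int.natCast_ne_zero.2 hk), mul_zero]

instance : IsProbabilityMeasure chebMeasure1 := by
  have h := integral_T1 0
  simp only [T1_zero, integral_const, smul_eq_mul, mul_one, if_true, Measure.real,
    ENNReal.toReal_eq_one_iff] at h
  exact ⟨h⟩

theorem integral_T1_mul_T1 (a b : ℕ) : ∫ t, T1 a t * T1 b t ∂chebMeasure1 =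
    if a = b then (if a = 0 then 1 else 1 / 2) else 0 := by
  rw [integral_chebMeasure1]
  split_ifs with hab ha
  · simp only [← hab, ha, T1, Nat.cast_zero]
    rw [integral_eval_T_real_mul_self_measureT_zero, inv_mul_cancel₀ pi_ne_zero]
  · simp only [← hab, T1]
    rw [integral_T_real_mul_self_measureT_of_ne_zero ha]
    field_simp
  · simp only [T1]
    rw [integral_eval_T_real_mul_eval_T_real_measureT_of_ne hab, mul_zero]

end ChebyshevMeasure

theorem integral_sq_chebMeasure1 : ∫ t, t ^ 2 ∂chebMeasure1 = 1 / 2 := by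
  simpa [sq] using integral_T1_mul_T1 1 1

instance (n : ℕ) : IsProbabilityMeasure (chebMeasure n) := by
  unfold chebMeasure; infer_instance

theorem ae_mem_box (n : ℕ) : ∀ᵐ x ∂chebMeasure n, x ∈ box n := by
  have h1 : ∀ᵐ t ∂chebMeasure1, t ∈ Set.Icc (-1 : ℝ) 1 :=
    (withDensity_absolutelyContinuous _ _).ae_le (ae_restrict_mem measurableSet_Icc)
  filter_upwards [ae_all_iff.2 fun i => (Measure.tendsto_eval_ae_ae (i := i)).eventually h1]
    with x hx using fun i _ => hx i

theorem integrable_chebMeasure {n : ℕ} {f : (Fin n → ℝ) → ℝ} (hf : ContinuousOn f (box n)) :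
    Integrable f (chebMeasure n) := by
  have hbox : IsCompact (box n) := isCompact_univ_pi fun _ => isCompact_Icc
  have := hf.integrableOn_compact (μ := chebMeasure n) hbox
  rwa [IntegrableOn, Measure.restrict_eq_self_of_ae_mem (ae_mem_box n)] at this

theorem integral_mul_prod_chebMeasure {n : ℕ} (i : Fin n) (u : ℝ → ℝ) (F : Fin n → ℝ → ℝ)
    (hF : ∀ j ≠ i, ∫ t, F j t ∂chebMeasure1 = 1) :
    ∫ x, u (x i) * ∏ j, F j (x j) ∂chebMeasure n = ∫ t, u t * F i t ∂chebMeasure1 := by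
  classical
  have hprod : ∀ x : Fin n → ℝ,
      u (x i) * ∏ j, F j (x j) = ∏ j, (if j = i then u (x j) else 1) * F j (x j) := by
    intro x
    rw [prod_mul_distrib, prod_ite_eq' univ i, if_pos (mem_univ i)]
  simp_rw [hprod]
  rw [chebMeasure,
    integral_fintype_prod_eq_prod (fun j t => (if j = i then u t else 1) * F j t),
    prod_eq_single i (fun j _ hj => by simp [hj, hF j hj]) (by simp)]
  simp

def chebKernel (r : ℕ) (c : ℕ → ℝ) (s t : ℝ) : ℝ :=
  1 + 2 * ∑ k ∈ Icc 1 r, c k * T1 k s * T1 k t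

@[fun_prop]
theorem continuous_chebKernel (r : ℕ) (c : ℕ → ℝ) (s : ℝ) : Continuous (chebKernel r c s) := by
  unfold chebKernel; fun_prop

theorem integral_T1_mul_chebKernel (r : ℕ) (c : ℕ → ℝ) (s : ℝ) (a : ℕ) :
    ∫ t, T1 a t * chebKernel r c s t ∂chebMeasure1 =
      (if a = 0 then 1 else 0) + (if a ∈ Icc 1 r then c a else 0) * T1 a s := by
  have hexp : ∀ t, T1 a t * chebKernel r c s t =
      T1 a t + ∑ k ∈ Icc 1 r, 2 * c k * T1 k s * (T1 a t * T1 k t) := by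
    intro t
    simp only [chebKernel, mul_add, mul_one, mul_sum]
    congr 1
    exact sum_congr rfl fun k _ => by ring
  simp_rw [hexp]
  rw [integral_add (integrable_chebMeasure1 (by fun_prop))
      (integrable_finsetSum _ fun k _ => integrable_chebMeasure1 (by fun_prop)),
    integral_finsetSum _ fun k _ => integrable_chebMeasure1 (by fun_prop), integral_T1]
  simp_rw [integral_const_mul, integral_T1_mul_T1, mul_ite, mul_zero, sum_ite_eq]
  congr 1
  split_ifs with ha h0
  · simp [h0] at ha
  · ring
  · simp

theorem integral_chebKernel (r : ℕ) (c : ℕ → ℝ) (s : ℝ) :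
    ∫ t, chebKernel r c s t ∂chebMeasure1 = 1 := by
  simpa using integral_T1_mul_chebKernel r c s 0

def chebKernelSecondMoment (r : ℕ) (c : ℕ → ℝ) (s : ℝ) : ℝ :=
  (1 - 2 * c 1) * s ^ 2 + 1 / 2 + (if 2 ∈ Icc 1 r then c 2 else 0) / 2 * T1 2 s

@[fun_prop]
theorem continuous_chebKernelSecondMoment (r : ℕ) (c : ℕ → ℝ) :
    Continuous (chebKernelSecondMoment r c) := by
  unfold chebKernelSecondMoment; fun_prop

theorem integral_sub_sq_mul_chebKernel {r : ℕ} (hr : 1 ≤ r) (c : ℕ → ℝ) (s : ℝ) :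
    ∫ t, (s - t) ^ 2 * chebKernel r c s t ∂chebMeasure1 = chebKernelSecondMoment r c s := by
  have hpt : ∀ t, (s - t) ^ 2 * chebKernel r c s t =
      (s ^ 2 + 1 / 2) * (T1 0 t * chebKernel r c s t) - 2 * s * (T1 1 t * chebKernel r c s t)
        + 1 / 2 * (T1 2 t * chebKernel r c s t) := by
    intro t
    rw [T1_zero, T1_one, T1_two]
    ring
  simp_rw [hpt]
  rw [integral_add, integral_sub, integral_const_mul, integral_const_mul, integral_const_mul,
    integral_T1_mul_chebKernel, integral_T1_mul_chebKernel, integral_T1_mul_chebKernel,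
    chebKernelSecondMoment]
  · have h0 : 0 ∉ Icc 1 r := by simp
    have h1 : 1 ∈ Icc 1 r := by simp [hr]
    simp only [if_true, if_neg one_ne_zero, if_neg two_ne_zero, if_neg h0, if_pos h1, T1_zero,
      T1_one]
    ring
  all_goals exact integrable_chebMeasure1 (by fun_prop)

theorem integral_chebKernelSecondMoment (r : ℕ) (c : ℕ → ℝ) :
    ∫ s, chebKernelSecondMoment r c s ∂chebMeasure1 = 1 - c 1 := by
  unfold chebKernelSecondMoment
  rw [integral_add, integral_add, integral_const_mul, integral_const_mul,
    integral_sq_chebMeasure1, integral_T1]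
  · simp
    ring
  all_goals exact integrable_chebMeasure1 (by fun_prop)

theorem integral_prod_chebKernel {n : ℕ} (r : ℕ) (c : ℕ → ℝ) (x : Fin n → ℝ) :
    ∫ y, ∏ i, chebKernel r c (x i) (y i) ∂chebMeasure n = 1 := by
  rw [chebMeasure, integral_fintype_prod_eq_prod (fun i => chebKernel r c (x i))]
  exact prod_eq_one fun i _ => integral_chebKernel r c (x i)

theorem integral_eNorm_sq_mul_prod_chebKernel {n r : ℕ} (hr : 1 ≤ r) (c : ℕ → ℝ)
    (x : Fin n → ℝ) :
    ∫ y, eNorm (x - y) ^ 2 * ∏ i, chebKernel r c (x i) (y i) ∂chebMeasure n =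
      ∑ i, chebKernelSecondMoment r c (x i) := by
  simp_rw [eNorm, sq_sqrt (sum_nonneg fun i _ => sq_nonneg _), sum_mul, Pi.sub_apply]
  rw [integral_finsetSum _ fun i _ => integrable_chebMeasure (by fun_prop)]
  refine sum_congr rfl fun i _ => ?_
  rw [integral_mul_prod_chebMeasure i (fun t => (x i - t) ^ 2) (fun j => chebKernel r c (x j))
    fun j _ => integral_chebKernel r c (x j)]
  exact integral_sub_sq_mul_chebKernel hr c (x i)

theorem integral_sum_chebKernelSecondMoment (n r : ℕ) (c : ℕ → ℝ) :
    ∫ x, ∑ i, chebKernelSecondMoment r c (x i) ∂chebMeasure n = n * (1 - c 1) := by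
  have hcoord (i : Fin n) : ∫ x, chebKernelSecondMoment r c (x i) ∂chebMeasure n = 1 - c 1 :=
    (integral_comp_eval (μ := fun _ => chebMeasure1)
      (continuous_chebKernelSecondMoment r c).aestronglyMeasurable).trans
    (integral_chebKernelSecondMoment r c)
  rw [integral_finsetSum _ fun i _ => integrable_chebMeasure (by fun_prop)]
  simp [hcoord, mul_sub]

theorem sum_range_succ_eq_add_sum_Icc {M : Type*} [AddCommMonoid M] (f : ℕ → M) (r : ℕ) :
    ∑ k ∈ range (r + 1), f k = f 0 + ∑ k ∈ Icc 1 r, f k := by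
  rw [Nat.range_succ_eq_Icc_zero, ← insert_Icc_add_one_left_eq_Icc (Nat.zero_le r),
    sum_insert (by simp), zero_add]

theorem chebKernel_eq_sum_range (r : ℕ) (c : ℕ → ℝ) (s t : ℝ) :
    chebKernel r c s t =
      ∑ k ∈ range (r + 1), (if k = 0 then 1 else 2 * c k) * T1 k s * T1 k t := by
  rw [sum_range_succ_eq_add_sum_Icc, chebKernel, mul_sum]
  simp only [if_true, T1_zero, mul_one]
  congr 1
  refine sum_congr rfl fun k hk => ?_
  rw [if_neg (by have := (mem_Icc.1 hk).1; omega)]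
  ring

theorem piFinset_range_subset_Nnr (n r : ℕ) :
    Fintype.piFinset (fun _ : Fin n => range (r + 1)) ⊆ Nnr n (n * r) := by
  intro α hα
  have hle (i : Fin n) : α i ≤ r :=
    Nat.lt_succ_iff.1 (mem_range.1 (Fintype.mem_piFinset.1 hα i))
  have hsum : ∑ i, α i ≤ n * r := (sum_le_sum fun i _ => hle i).trans (by simp)
  simp only [Nnr, mem_filter, Fintype.mem_piFinset, mem_range]
  exact ⟨fun i => Nat.lt_succ_of_le
    ((single_le_sum (fun j _ => Nat.zero_le (α j)) (mem_univ i)).trans hsum), hsum⟩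

theorem exists_prod_chebKernel_eq_sum_Nnr (n r : ℕ) (c : ℕ → ℝ) :
    ∃ a : (Fin n → ℕ) → ℝ, ∀ x y,
      ∏ i, chebKernel r c (x i) (y i) = ∑ α ∈ Nnr n (n * r), a α * Tm α x * Tm α y := by
  classical
  refine ⟨fun α => if α ∈ Fintype.piFinset (fun _ => range (r + 1))
    then ∏ i, (if α i = 0 then 1 else 2 * c (α i)) else 0, fun x y => ?_⟩
  dsimp only
  rw [← sum_subset (piFinset_range_subset_Nnr n r) fun α _ hα => by
    rw [if_neg hα, zero_mul, zero_mul]]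
  simp_rw [chebKernel_eq_sum_range, prod_univ_sum]
  refine sum_congr rfl fun α hα => ?_
  rw [if_pos hα, Tm, Tm, ← prod_mul_distrib, ← prod_mul_distrib]

theorem four_mul_sin_mul_sum_sin_mul_sin (a : ℝ) (N k : ℕ) :
    4 * sin a * ∑ j ∈ range N, sin ((j + 1) * a) * sin ((j + k + 1) * a) =
      2 * N * sin a * cos (k * a) - sin ((2 * N + k + 1) * a) + sin ((k + 1) * a) := by
  have hterm (j : ℕ) : 4 * sin a * (sin ((j + 1) * a) * sin ((j + k + 1) * a)) =
      2 * sin a * cos (k * a) -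
        (sin ((2 * (j + 1 : ℕ) + k + 1) * a) - sin ((2 * j + k + 1) * a)) := by
    set u := (j + 1) * a
    set v := (j + k + 1) * a
    rw [show (k : ℝ) * a = v - u by ring, show (2 * (j + 1 : ℕ) + k + 1) * a = u + v + a by
      push_cast; ring, show (2 * j + k + 1) * a = u + v - a by ring]
    simp only [cos_sub, sin_add, sin_sub, cos_add]
    ring
  rw [mul_sum, sum_congr rfl fun j _ => hterm j, sum_sub_distrib,
    sum_range_sub (fun j => sin ((2 * j + k + 1) * a))]
  simp only [sum_const, card_range, nsmul_eq_mul, Nat.cast_zero, mul_zero, zero_add]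
  ring

theorem sum_range_autocorrelation_succ (b : ℕ → ℝ) {N k : ℕ} (hk : k ≤ N) :
    ∑ j ∈ range (N + 1 - k), b j * b (j + k) =
      b 0 * b k + ∑ j ∈ range (N - k), b (j + 1) * b (j + k + 1) := by
  rw [show N + 1 - k = N - k + 1 by omega, sum_range_succ', zero_add, add_comm]
  congr 1
  exact sum_congr rfl fun j _ => by rw [add_right_comm]

theorem sum_range_succ_autocorrelation_mul (b h : ℕ → ℝ) (N : ℕ) :
    ∑ k ∈ range (N + 1),
        (if k = 0 then 1 else 2) * (∑ j ∈ range (N + 1 - k), b j * b (j + k)) * h k =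
      b 0 ^ 2 * h 0 + 2 * b 0 * ∑ j ∈ range N, b (j + 1) * h (j + 1) +
        ∑ k ∈ range N,
          (if k = 0 then 1 else 2) * (∑ j ∈ range (N - k), b (j + 1) * b (j + k + 1)) * h k := by
  have hfirst : ∑ k ∈ range (N + 1), (if k = 0 then 1 else 2) * (b 0 * b k) * h k =
      b 0 ^ 2 * h 0 + 2 * b 0 * ∑ j ∈ range N, b (j + 1) * h (j + 1) := by
    rw [sum_range_succ', mul_sum, add_comm]
    congr 1
    · simp [sq]
    · exact sum_congr rfl fun k _ => by rw [if_neg (Nat.add_one_ne_zero k)]; ring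
  have hlast : ∑ k ∈ range (N + 1), (if k = 0 then 1 else 2) *
      (∑ j ∈ range (N - k), b (j + 1) * b (j + k + 1)) * h k =
      ∑ k ∈ range N, (if k = 0 then 1 else 2) *
        (∑ j ∈ range (N - k), b (j + 1) * b (j + k + 1)) * h k := by
    rw [sum_range_succ, Nat.sub_self, sum_range_zero, mul_zero, zero_mul, add_zero]
  rw [← hfirst, ← hlast, ← sum_add_distrib]
  refine sum_congr rfl fun k hk => ?_
  rw [sum_range_autocorrelation_succ b (Nat.lt_succ_iff.1 (mem_range.1 hk))]
  ring

/-- Peeling off `b 0` leaves the same sums for the shifted sequence `b (· + 1)`, rotated by `ψ`. -/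
theorem sq_add_sq_sum_eq_sum_autocorrelation (b : ℕ → ℝ) (ψ : ℝ) (N : ℕ) :
    (∑ j ∈ range N, b j * cos (j * ψ)) ^ 2 + (∑ j ∈ range N, b j * sin (j * ψ)) ^ 2 =
      ∑ k ∈ range N,
        (if k = 0 then 1 else 2) * (∑ j ∈ range (N - k), b j * b (j + k)) * cos (k * ψ) := by
  induction N generalizing b with
  | zero => simp
  | succ N ih =>
    set C := ∑ j ∈ range N, b (j + 1) * cos (j * ψ)
    set S := ∑ j ∈ range N, b (j + 1) * sin (j * ψ)
    have hshift : ∑ j ∈ range N, b (j + 1) * cos ((j + 1 : ℕ) * ψ) = cos ψ * C - sin ψ * S := by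
      simp only [C, S, mul_sum, ← sum_sub_distrib]
      refine sum_congr rfl fun j _ => ?_
      rw [Nat.cast_succ, add_mul, one_mul, cos_add]
      ring
    have hC : ∑ j ∈ range (N + 1), b j * cos (j * ψ) = b 0 + (cos ψ * C - sin ψ * S) := by
      rw [sum_range_succ', ← hshift]
      simp [add_comm]
    have hS : ∑ j ∈ range (N + 1), b j * sin (j * ψ) = sin ψ * C + cos ψ * S := by
      simp only [sum_range_succ', C, S, mul_sum, ← sum_add_distrib, Nat.cast_zero, zero_mul,
        sin_zero, mul_zero, add_zero]
      refine sum_congr rfl fun j _ => ?_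
      rw [Nat.cast_succ, add_mul, one_mul, sin_add]
      ring
    rw [hC, hS, sum_range_succ_autocorrelation_mul b (fun k => cos (k * ψ)), ← ih]
    simp only [Nat.cast_zero, zero_mul, cos_zero, hshift]
    linear_combination (C ^ 2 + S ^ 2) * sin_sq_add_cos_sq ψ

def kpmCoeff (r k : ℕ) : ℝ :=
  (((r : ℝ) - k + 2) * cos (π * k / (r + 2)) + sin (π * k / (r + 2)) * cot (π / (r + 2))) /
    (r + 2)

theorem sin_pi_div_nat_add_two_pos (r : ℕ) : 0 < sin (π / (r + 2)) :=
  sin_pos_of_pos_of_lt_pi (by positivity)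
    (div_lt_self pi_pos (by linarith [r.cast_nonneg (α := ℝ)]))

theorem kpmCoeff_zero (r : ℕ) : kpmCoeff r 0 = 1 := by
  have : (r : ℝ) + 2 ≠ 0 := by positivity
  simp [kpmCoeff, this]

theorem kpmCoeff_one (r : ℕ) : kpmCoeff r 1 = cos (π / (r + 2)) := by
  have := (sin_pi_div_nat_add_two_pos r).ne'
  rw [kpmCoeff, cot_eq_cos_div_sin, Nat.cast_one, mul_one]
  field_simp
  ring

theorem kpmCoeff_eq_autocorrelation {r k : ℕ} (hk : k ≤ r + 1) :
    kpmCoeff r k = 2 / (r + 2) * ∑ j ∈ range (r + 1 - k),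
      sin ((j + 1) * (π / (r + 2))) * sin ((j + k + 1) * (π / (r + 2))) := by
  have hsin := (sin_pi_div_nat_add_two_pos r).ne'
  rw [kpmCoeff, cot_eq_cos_div_sin, show π * k / (r + 2) = k * (π / (r + 2)) by ring]
  set a := π / (r + 2) with ha
  have hN : ((r + 1 - k : ℕ) : ℝ) = r + 1 - k := by push_cast [Nat.cast_sub hk]; ring
  have hend : sin ((2 * ((r + 1 - k : ℕ) : ℝ) + k + 1) * a) = -sin ((k + 1) * a) := by
    rw [hN, show (2 * ((r : ℝ) + 1 - k) + k + 1) * a = 2 * π - (k + 1) * a by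
      rw [ha]; field_simp; ring, sin_two_pi_sub]
  have key := four_mul_sin_mul_sum_sin_mul_sin a (r + 1 - k) k
  rw [hend, hN] at key
  have hS : ∑ j ∈ range (r + 1 - k), sin ((j + 1) * a) * sin ((j + k + 1) * a) =
      (2 * (r + 1 - k) * sin a * cos (k * a) + 2 * sin ((k + 1) * a)) / (4 * sin a) := by
    rw [eq_div_iff (by positivity), mul_comm, key]
    ring
  rw [hS, show ((k : ℝ) + 1) * a = k * a + a by ring, sin_add]
  field_simp
  ring

theorem one_add_two_mul_sum_kpmCoeff_mul_cos_nonneg (r : ℕ) (ψ : ℝ) :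
    0 ≤ 1 + 2 * ∑ k ∈ Icc 1 r, kpmCoeff r k * cos (k * ψ) := by
  set b : ℕ → ℝ := fun j => sin ((j + 1) * (π / (r + 2)))
  have hA {k : ℕ} (hk : k ≤ r + 1) :
      ∑ j ∈ range (r + 1 - k), b j * b (j + k) = (r + 2) / 2 * kpmCoeff r k := by
    have hcancel : (r + 2 : ℝ) / 2 * (2 / (r + 2)) = 1 := by field_simp
    rw [kpmCoeff_eq_autocorrelation hk, ← mul_assoc, hcancel, one_mul]
    simp only [b, Nat.cast_add]
  have hsq : 1 + 2 * ∑ k ∈ Icc 1 r, kpmCoeff r k * cos (k * ψ) = 2 / (r + 2) *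
      ((∑ j ∈ range (r + 1), b j * cos (j * ψ)) ^ 2 +
        (∑ j ∈ range (r + 1), b j * sin (j * ψ)) ^ 2) := by
    rw [sq_add_sq_sum_eq_sum_autocorrelation, sum_range_succ_eq_add_sum_Icc, mul_add]
    congr 1
    · rw [hA (Nat.zero_le _), kpmCoeff_zero]
      field_simp
      simp
    · simp only [mul_sum (Icc 1 r)]
      refine sum_congr rfl fun k hk => ?_
      have hk' := mem_Icc.1 hk
      rw [if_neg (by omega), hA (by omega)]
      field_simp
  rw [hsq]
  positivity

theorem chebKernel_kpmCoeff_cos_nonneg (r : ℕ) (θ φ : ℝ) :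
    0 ≤ chebKernel r (kpmCoeff r) (cos θ) (cos φ) := by
  have hsplit : chebKernel r (kpmCoeff r) (cos θ) (cos φ) =
      ((1 + 2 * ∑ k ∈ Icc 1 r, kpmCoeff r k * cos (k * (θ + φ))) +
        (1 + 2 * ∑ k ∈ Icc 1 r, kpmCoeff r k * cos (k * (θ - φ)))) / 2 := by
    have hterm (k : ℕ) : kpmCoeff r k * cos (k * θ) * cos (k * φ) =
        (kpmCoeff r k * cos (k * (θ + φ)) + kpmCoeff r k * cos (k * (θ - φ))) / 2 := by
      rw [mul_add, mul_sub, cos_add, cos_sub]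
      ring
    simp only [chebKernel, T1_cos, hterm, ← sum_div, sum_add_distrib]
    ring
  rw [hsplit]
  have := one_add_two_mul_sum_kpmCoeff_mul_cos_nonneg r (θ + φ)
  have := one_add_two_mul_sum_kpmCoeff_mul_cos_nonneg r (θ - φ)
  positivity

theorem chebKernel_kpmCoeff_nonneg (r : ℕ) {s t : ℝ} (hs : s ∈ Set.Icc (-1) 1)
    (ht : t ∈ Set.Icc (-1) 1) : 0 ≤ chebKernel r (kpmCoeff r) s t := by
  rw [← cos_arccos hs.1 hs.2, ← cos_arccos ht.1 ht.2]
  exact chebKernel_kpmCoeff_cos_nonneg r _ _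

/-- The product of n univariate minimum-resolution (KPM) kernels of
degree r is a polynomial kernel of degree nr on [−1,1]ⁿ which is nonnegative,
normalized w.r.t. the product Chebyshev measure, and has squared resolution
n(1 − g₁) = n(1 − cos(π/(r+2))). -/
theorem product_KPM_kernel_properties (n r : ℕ) (hr : 1 ≤ r)
    (g : ℕ → ℝ)
    (hg : ∀ k, g k = (((r : ℝ) - k + 2) * Real.cos (π * k / (r + 2))
      + Real.sin (π * k / (r + 2)) * Real.cot (π / (r + 2))) / (r + 2))
    (K : (Fin n → ℝ) → (Fin n → ℝ) → ℝ)
    (hK : ∀ x y, K x y = ∏ i,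
      (1 + 2 * ∑ k ∈ Finset.Icc 1 r, g k * T1 k (x i) * T1 k (y i))) :
    (∃ c : (Fin n → ℕ) → ℝ, ∀ x y,
        K x y = ∑ α ∈ Nnr n (n * r), c α * Tm α x * Tm α y) ∧
    (∀ x ∈ box n, ∀ y ∈ box n, 0 ≤ K x y) ∧
    (∀ x, ∫ y, K x y ∂(chebMeasure n) = 1) ∧
    (∫ x, ∫ y, eNorm (x - y) ^ 2 * K x y ∂(chebMeasure n) ∂(chebMeasure n)
        = n * (1 - g 1) ∧
      (n : ℝ) * (1 - g 1) = n * (1 - Real.cos (π / (r + 2)))) := by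
  obtain rfl : g = kpmCoeff r := funext hg
  obtain rfl : K = fun x y => ∏ i, chebKernel r (kpmCoeff r) (x i) (y i) :=
    funext fun x => funext (hK x)
  refine ⟨exists_prod_chebKernel_eq_sum_Nnr n r _,
    fun x hx y hy => prod_nonneg fun i _ =>
      chebKernel_kpmCoeff_nonneg r (hx i trivial) (hy i trivial),
    integral_prod_chebKernel r _, ?_, by rw [kpmCoeff_one]⟩
  simp_rw [integral_eNorm_sq_mul_prod_chebKernel hr]
  exact integral_sum_chebKernelSecondMoment n r _
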